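/- Let α : Z/2[F] → Z/2[G] be the ring isomorphism taking F^n to G^n, and define T(f) = U(f) + α(f) for f in Z/2[F]. Then T maps Z/2[F] into Z/2[F]; moreover T(F^n) is a Z/2-linear combination of powers F^k with k ≤ n - 2 and k ≡ n (mod 2). In particular T takes 1, F, F^2, F^3 to 0, 0, 0, F respectively. -/

import Mathlib

/-!
Over `𝔽₂` one has `F⁴ = G⁴ + G F`. Since `U (G h) = F U(h)`, this gives
`U(F^(n+4)) = F⁴ U(Fⁿ) + F U(F^(n+1))`, while `G^(n+4) = F⁴ Gⁿ + F G^(n+1)`; hence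
`T(F^(n+4)) = F⁴ T(Fⁿ) + F T(F^(n+1))`, and the claim follows by induction from
`T(1) = T(F) = T(F²) = 0` and `T(F³) = F`. These four values are computed by expanding
`Fⁿ` in powers of `G` with remainders of degree `< 4`, on which `U` is given.
-/

open Polynomial

noncomputable def Fp : Polynomial (ZMod 2) := X * (X + 1) ^ 3

noncomputable def Gp : Polynomial (ZMod 2) := X ^ 3 * (X + 1)

def lowerParityPowSpan (R : Type*) {A : Type*} [Semiring R] [Semiring A] [Module R A]
    (f : A) (n : ℕ) : Submodule R A :=
  Submodule.span R {p | ∃ k : ℕ, k + 2 ≤ n ∧ k % 2 = n % 2 ∧ p = f ^ k}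

section Recurrence

variable {R A : Type*} [CommSemiring R]

theorem lowerParityPowSpan_mono [Semiring A] [Module R A] {f : A} {n m : ℕ} (hnm : n ≤ m)
    (hpar : n % 2 = m % 2) :
    lowerParityPowSpan R f n ≤ lowerParityPowSpan R f m := by
  refine Submodule.span_mono ?_
  rintro p ⟨k, hk, hkpar, rfl⟩
  exact ⟨k, by omega, by omega, rfl⟩

theorem pow_mul_mem_lowerParityPowSpan [CommSemiring A] [Algebra R A] {f p : A} {n : ℕ}
    (j : ℕ) (hp : p ∈ lowerParityPowSpan R f n) :
    f ^ j * p ∈ lowerParityPowSpan R f (n + j) := by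
  induction hp using Submodule.span_induction with
  | mem x hx =>
    obtain ⟨k, hk, hkpar, rfl⟩ := hx
    exact Submodule.subset_span ⟨k + j, by omega, by omega, by ring⟩
  | zero => simp
  | add x y _ _ hx hy => rw [mul_add]; exact add_mem hx hy
  | smul r x _ hx => rw [mul_smul_comm]; exact Submodule.smul_mem _ r hx

variable [CommRing A] [Algebra R A] (U : A →ₗ[R] A) {f g : A}

theorem map_pow_mul_of_map_mul (hU : ∀ x, U (g * x) = f * U x) (n : ℕ) (x : A) :
    U (g ^ n * x) = f ^ n * U x := by
  induction n generalizing x with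
  | zero => simp
  | succ n ih => rw [pow_succ, mul_assoc, ih, hU, pow_succ, mul_assoc]

theorem map_pow_add_four_add_pow [CharP A 2] (hU : ∀ x, U (g * x) = f * U x)
    (hfg : f ^ 4 = g ^ 4 + g * f) (n : ℕ) :
    U (f ^ (n + 4)) + g ^ (n + 4) =
      f ^ 4 * (U (f ^ n) + g ^ n) + f * (U (f ^ (n + 1)) + g ^ (n + 1)) := by
  have hsplit : f ^ (n + 4) = g ^ 4 * f ^ n + g * f ^ (n + 1) := by
    rw [pow_add, hfg]; ring
  rw [hsplit, map_add, map_pow_mul_of_map_mul U hU, hU]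
  linear_combination (-g ^ n) * hfg - f * g ^ (n + 1) * CharTwo.two_eq_zero (R := A)

theorem map_pow_add_pow_mem_lowerParityPowSpan [CharP A 2] (hU : ∀ x, U (g * x) = f * U x)
    (hfg : f ^ 4 = g ^ 4 + g * f)
    (hbase : ∀ n < 4, U (f ^ n) + g ^ n ∈ lowerParityPowSpan R f n) (n : ℕ) :
    U (f ^ n) + g ^ n ∈ lowerParityPowSpan R f n := by
  induction n using Nat.strong_induction_on with
  | _ n ih =>
    rcases Nat.lt_or_ge n 4 with hn | hn
    · exact hbase n hn
    obtain ⟨m, rfl⟩ := Nat.exists_eq_add_of_le' hn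
    rw [map_pow_add_four_add_pow U hU hfg]
    refine add_mem (pow_mul_mem_lowerParityPowSpan 4 (ih m (by omega))) ?_
    have h := pow_mul_mem_lowerParityPowSpan 1 (ih (m + 1) (by omega))
    rw [pow_one] at h
    exact lowerParityPowSpan_mono (by omega) (by omega) h

end Recurrence

theorem Fp_pow_four : Fp ^ 4 = Gp ^ 4 + Gp * Fp := by
  unfold Fp Gp; grind

section BaseCases

variable (U : Polynomial (ZMod 2) →ₗ[ZMod 2] Polynomial (ZMod 2))

theorem map_Fp_add_Gp (hsemi : ∀ f, U (Gp * f) = Fp * U f) (h0 : U 1 = 1) (h1 : U X = X)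
    (h2 : U (X ^ 2) = X ^ 2) : U Fp + Gp = 0 := by
  rw [show Fp = Gp * 1 + (X ^ 2 + X) by unfold Fp Gp; grind]
  simp only [map_add, hsemi, h0, h1, h2]
  unfold Fp Gp; grind

theorem map_Fp_sq_add_Gp_sq (hsemi : ∀ f, U (Gp * f) = Fp * U f) (h0 : U 1 = 1)
    (h2 : U (X ^ 2) = X ^ 2) (h3 : U (X ^ 3) = X ^ 3 + X ^ 2 + X) :
    U (Fp ^ 2) + Gp ^ 2 = 0 := by
  rw [show Fp ^ 2 = Gp * (Gp * 1 + 1) + (X ^ 3 + X ^ 2) by unfold Fp Gp; grind]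
  simp only [map_add, hsemi, h0, h2, h3]
  unfold Fp Gp; grind

theorem map_Fp_cube_add_Gp_cube (hsemi : ∀ f, U (Gp * f) = Fp * U f) (h0 : U 1 = 1)
    (h1 : U X = X) (h2 : U (X ^ 2) = X ^ 2) (h3 : U (X ^ 3) = X ^ 3 + X ^ 2 + X) :
    U (Fp ^ 3) + Gp ^ 3 = Fp := by
  rw [show Fp ^ 3 = Gp * (Gp * (Gp * 1 + X ^ 2 + X + 1) + X ^ 3 + 1) by unfold Fp Gp; grind]
  simp only [map_add, hsemi, h0, h1, h2, h3]
  unfold Fp Gp; grind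

end BaseCases

theorem stmt12 (U : Polynomial (ZMod 2) →ₗ[ZMod 2] Polynomial (ZMod 2))
    (hsemi : ∀ f, U (Gp * f) = Fp * U f)
    (h0 : U 1 = 1) (h1 : U X = X) (h2 : U (X ^ 2) = X ^ 2)
    (h3 : U (X ^ 3) = X ^ 3 + X ^ 2 + X) :
    (∀ n : ℕ, U (Fp ^ n) + Gp ^ n ∈
      Submodule.span (ZMod 2) {p | ∃ k : ℕ, k + 2 ≤ n ∧ k % 2 = n % 2 ∧ p = Fp ^ k}) ∧
    U 1 + 1 = 0 ∧ U Fp + Gp = 0 ∧ U (Fp ^ 2) + Gp ^ 2 = 0 ∧ U (Fp ^ 3) + Gp ^ 3 = Fp := by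
  have t0 : U 1 + 1 = 0 := by rw [h0]; exact CharTwo.add_self_eq_zero 1
  have t1 := map_Fp_add_Gp U hsemi h0 h1 h2
  have t2 := map_Fp_sq_add_Gp_sq U hsemi h0 h2 h3
  have t3 := map_Fp_cube_add_Gp_cube U hsemi h0 h1 h2 h3
  refine ⟨map_pow_add_pow_mem_lowerParityPowSpan U hsemi Fp_pow_four ?_, t0, t1, t2, t3⟩
  intro n hn
  interval_cases n
  · rw [pow_zero, pow_zero, t0]; exact zero_mem _
  · rw [pow_one, pow_one, t1]; exact zero_mem _
  · rw [t2]; exact zero_mem _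
  · rw [t3]; exact Submodule.subset_span ⟨1, by omega, by omega, (pow_one Fp).symm⟩
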